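/- Let v be a unit vector orthogonal to the all-ones vector 1 in R^d, and let x = α·v + β·1 with α ≠ 0. Then LayerNorm(x) = √d·v if α > 0 and LayerNorm(x) = -√d·v if α < 0. -/

import Mathlib

/-!
Since `v ⊥ 1`, centering removes the `β • 1` component and leaves `α • v`; since `‖v‖ = 1`,
the standard deviation of `α • v` is `|α| / √d`. Dividing gives `sign α • √d • v`.
-/

open Finset

theorem EuclideanSpace.inner_toLp_one {ι : Type*} [Fintype ι] (v : EuclideanSpace ℝ ι) :
    inner ℝ v (WithLp.toLp 2 (fun _ => 1 : ι → ℝ) : EuclideanSpace ℝ ι) = ∑ i, v i := by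
  simp [PiLp.inner_apply]

theorem EuclideanSpace.sum_sq_eq_norm_sq {ι : Type*} [Fintype ι] (v : EuclideanSpace ℝ ι) :
    ∑ i, v i ^ 2 = ‖v‖ ^ 2 := by
  simp [EuclideanSpace.norm_sq_eq]

namespace LayerNorm

variable {ι : Type*} [Fintype ι]

noncomputable def mean (x : ι → ℝ) : ℝ := (∑ i, x i) / Fintype.card ι

noncomputable def stdDev (x : ι → ℝ) : ℝ :=
  Real.sqrt ((∑ i, (x i - mean x) ^ 2) / Fintype.card ι)

variable {u : ι → ℝ}

theorem mean_affine [Nonempty ι] (hu : ∑ i, u i = 0) (a b : ℝ) :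
    mean (fun i => a * u i + b) = b := by
  have hn : (Fintype.card ι : ℝ) ≠ 0 := by positivity
  simp only [mean, sum_add_distrib, ← mul_sum, hu, sum_const, card_univ, nsmul_eq_mul]
  field_simp
  ring

theorem stdDev_affine [Nonempty ι] (hu : ∑ i, u i = 0) (hu2 : ∑ i, u i ^ 2 = 1) (a b : ℝ) :
    stdDev (fun i => a * u i + b) = |a| / Real.sqrt (Fintype.card ι) := by
  have hsq : ∑ i, (a * u i + b - b) ^ 2 = a ^ 2 := by
    simp only [add_sub_cancel_right, mul_pow, ← mul_sum, hu2, mul_one]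
  rw [stdDev, mean_affine hu, hsq, Real.sqrt_div (sq_nonneg a), Real.sqrt_sq_eq_abs]

theorem normalize_affine (hu : ∑ i, u i = 0) (hu2 : ∑ i, u i ^ 2 = 1) (a b : ℝ) (i : ι) :
    (a * u i + b - mean (fun j => a * u j + b)) / stdDev (fun j => a * u j + b) =
      SignType.sign a * Real.sqrt (Fintype.card ι) * u i := by
  have : Nonempty ι := ⟨i⟩
  rw [mean_affine hu, stdDev_affine hu hu2, add_sub_cancel_right]
  rcases eq_or_ne a 0 with rfl | ha
  · simp -- here `σ = 0`, and division by zero gives `0`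
  have hn : Real.sqrt (Fintype.card ι) ≠ 0 := by positivity
  have habs : |a| ≠ 0 := abs_ne_zero.mpr ha
  nth_rewrite 1 [← sign_mul_abs a]
  field_simp

end LayerNorm

theorem layerNorm_on_plane_general (d : ℕ)
    (v : EuclideanSpace ℝ (Fin d)) (hv : ‖v‖ = 1)
    (hvone : (inner ℝ v (WithLp.toLp 2 (fun _ => 1 : Fin d → ℝ) : EuclideanSpace ℝ (Fin d)) : ℝ) = 0)
    (α β : ℝ)
    (x : Fin d → ℝ) (hx : x = fun i => α * v i + β)
    (μ σ : ℝ)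
    (hμ : μ = (∑ i : Fin d, x i) / d)
    (hσ : σ = Real.sqrt ((∑ i : Fin d, (x i - μ) ^ 2) / d)) :
    (0 < α → ∀ i, (x i - μ) / σ = Real.sqrt d * v i) ∧
    (α < 0 → ∀ i, (x i - μ) / σ = -(Real.sqrt d) * v i) := by
  have hsum : ∑ i, v i = 0 := (EuclideanSpace.inner_toLp_one v).symm.trans hvone
  have hsq : ∑ i, v i ^ 2 = 1 := by rw [EuclideanSpace.sum_sq_eq_norm_sq, hv, one_pow]
  have hμ' : μ = LayerNorm.mean x := by rw [hμ, LayerNorm.mean, Fintype.card_fin]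
  have hσ' : σ = LayerNorm.stdDev x := by rw [hσ, LayerNorm.stdDev, ← hμ', Fintype.card_fin]
  have key : ∀ i, (x i - μ) / σ = SignType.sign α * Real.sqrt d * v i := by
    intro i
    rw [hμ', hσ', hx, LayerNorm.normalize_affine hsum hsq, Fintype.card_fin]
  refine ⟨fun hpos i => ?_, fun hneg i => ?_⟩
  · rw [key, sign_pos hpos]; simp
  · rw [key, sign_neg hneg]; simp

/-- For `x = α·v + β·1` with `v` a unit vector orthogonal to the ones vector and `α ≠ 0`,
LayerNorm maps `x` to `√d·v` when `α > 0` and to `-√d·v` when `α < 0`. -/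
theorem layerNorm_on_plane (d : ℕ) (hd : 2 ≤ d)
    (v : EuclideanSpace ℝ (Fin d)) (hv : ‖v‖ = 1)
    (hvone : (inner ℝ v (WithLp.toLp 2 (fun _ => 1 : Fin d → ℝ) : EuclideanSpace ℝ (Fin d)) : ℝ) = 0)
    (α β : ℝ) (hα : α ≠ 0)
    (x : Fin d → ℝ) (hx : x = fun i => α * v i + β)
    (μ σ : ℝ)
    (hμ : μ = (∑ i : Fin d, x i) / d)
    (hσ : σ = Real.sqrt ((∑ i : Fin d, (x i - μ) ^ 2) / d)) :
    (0 < α → ∀ i, (x i - μ) / σ = Real.sqrt d * v i) ∧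
    (α < 0 → ∀ i, (x i - μ) / σ = -(Real.sqrt d) * v i) :=
  layerNorm_on_plane_general d v hv hvone α β x hx μ σ hμ hσ
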